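/- arXiv:2308.14692 — 2 statements merged into one kernel-verified Lean document; each statement's English description precedes it below -/
import Mathlib

section
/- Let Δ be the Dynkin diagram A_r and let d = (1,1,…,1) ∈ ℤ^r be the vector of dimensions of the nontrivial irreducible representations of the cyclic McKay group ℤ/(r+1)ℤ. Then for any m = (m₁,…,m_r) ∈ ℤ^r, the quantity N(m) = m·d − (r+1)·(m,m)_Δ/2 is a nonnegative integer, where (m,m)_Δ = −2∑mᵢ² + 2∑_{i adjacent j, i<j} mᵢmⱼ is the A_r root lattice pairing. -/
open Finset

private lemma nonneg_aux (c k x : ℤ) (h : |k| ≤ c) : 0 ≤ c * x^2 - k * x := by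
  have h1 : |x| ≤ x^2 := by
    rcases eq_or_ne x 0 with h0 | h0
    · simp [h0]
    · have hx : 1 ≤ |x| := Int.one_le_abs h0
      nlinarith [abs_nonneg x, sq_abs x]
  have h2 : k * x ≤ |k| * |x| := le_trans (le_abs_self _) (le_of_eq (abs_mul k x))
  have h3 : |k| * |x| ≤ c * x^2 :=
    mul_le_mul h h1 (abs_nonneg x) (le_trans (abs_nonneg k) h)
  linarith

private lemma sq_id (s : ℕ) (m : ℕ → ℤ) :
    2 * ((∑ i ∈ range (s+1), (m i)^2) - ∑ i ∈ range s, m i * m (i+1))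
    = (m 0)^2 + (m s)^2 + ∑ j ∈ range s, (m j - m (j+1))^2 := by
  induction s with
  | zero => simp; ring
  | succ n ih =>
    rw [sum_range_succ (fun i => (m i)^2), sum_range_succ (fun i => m i * m (i+1)),
        sum_range_succ (fun j => (m j - m (j+1))^2)]
    linear_combination ih

private lemma lin_id (s : ℕ) (m : ℕ → ℤ) :
    ∑ j ∈ range s, (((s:ℤ) - 1 - 2*(j:ℤ)) * (m j - m (j+1)))
    = ((s:ℤ)+1) * m 0 + ((s:ℤ)+1) * m s - 2 * ∑ i ∈ range (s+1), m i := by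
  induction s with
  | zero => simp; ring
  | succ n ih =>
    have tel : ∑ j ∈ range n, (m j - m (j+1)) = m 0 - m n := Finset.sum_range_sub' m n
    have expand : ∑ j ∈ range n, ((((n:ℤ)+1) - 1 - 2*(j:ℤ)) * (m j - m (j+1)))
        = (∑ j ∈ range n, (((n:ℤ) - 1 - 2*(j:ℤ)) * (m j - m (j+1))))
          + ∑ j ∈ range n, (m j - m (j+1)) := by
      rw [← sum_add_distrib]
      exact sum_congr rfl fun j hj => by ring
    rw [sum_range_succ (fun j => ((((n:ℕ)+1:ℕ):ℤ) - 1 - 2*(j:ℤ)) * (m j - m (j+1))),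
        sum_range_succ (fun i => m i)]
    push_cast
    rw [expand, tel, ih]
    -- cast already normalized
    ring

theorem stmt7 (r : ℕ) (m : ℕ → ℤ) :
    0 ≤ (∑ i ∈ Finset.range r, m i) +
      ((r : ℤ) + 1) * ((∑ i ∈ Finset.range r, (m i)^2) -
        ∑ i ∈ Finset.range (r - 1), m i * m (i + 1)) := by
  cases r with
  | zero => simp
  | succ s =>
    have hsq := sq_id s m
    have hlin := lin_id s m
    have hrange : (s + 1 : ℕ) - 1 = s := rfl
    rw [hrange]
    set S := ∑ i ∈ range (s+1), m i with hS
    set Q := (∑ i ∈ range (s+1), (m i)^2) - ∑ i ∈ range s, m i * m (i+1) with hQ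
    set D2 := ∑ j ∈ range s, (m j - m (j+1))^2 with hD2
    set L := ∑ j ∈ range s, (((s:ℤ) - 1 - 2*(j:ℤ)) * (m j - m (j+1))) with hL
    have h1 : 0 ≤ ((s:ℤ)+2) * (m 0)^2 + ((s:ℤ)+1) * m 0 := by
      have := nonneg_aux ((s:ℤ)+2) (-((s:ℤ)+1)) (m 0)
        (by rw [abs_le]; constructor <;> omega)
      linarith
    have h2 : 0 ≤ ((s:ℤ)+2) * (m s)^2 + ((s:ℤ)+1) * m s := by
      have := nonneg_aux ((s:ℤ)+2) (-((s:ℤ)+1)) (m s)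
        (by rw [abs_le]; constructor <;> omega)
      linarith
    have h3 : 0 ≤ ((s:ℤ)+2) * D2 - L := by
      have : 0 ≤ ∑ j ∈ range s,
          (((s:ℤ)+2) * (m j - m (j+1))^2 - ((s:ℤ) - 1 - 2*(j:ℤ)) * (m j - m (j+1))) := by
        apply sum_nonneg
        intro j hj
        have hjs : (j:ℤ) < (s:ℤ) := by exact_mod_cast mem_range.mp hj
        exact nonneg_aux _ _ _ (by rw [abs_le]; constructor <;> linarith)
      rw [sum_sub_distrib, ← mul_sum] at this
      exact this
    have key : 2 * (S + (((s:ℕ):ℤ) + 1 + 1) * Q)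
        = (((s:ℤ)+2) * (m 0)^2 + ((s:ℤ)+1) * m 0)
          + (((s:ℤ)+2) * (m s)^2 + ((s:ℤ)+1) * m s)
          + (((s:ℤ)+2) * D2 - L) := by
      linear_combination ((s:ℤ)+2) * hsq + hlin
    have goal2 : (0:ℤ) ≤ 2 * (S + (((s:ℕ):ℤ) + 1 + 1) * Q) := by
      rw [key]; linarith
    have : ((s+1 : ℕ) : ℤ) + 1 = ((s:ℕ):ℤ) + 1 + 1 := by push_cast; ring
    rw [this]
    linarith
end

section
/- The number of 8-tuples (n₁,…,n₈) ∈ ℤ⁸ with ∑ᵢ (2nᵢ² + nᵢ) = 2 equals 28. -/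
def gB (b : Bool) : ℤ := if b then -1 else 0

lemma term_nonneg (x : ℤ) : 0 ≤ 2 * x ^ 2 + x := by
  rcases le_or_gt 0 x with h | h
  · nlinarith
  · have : x ≤ -1 := by omega
    nlinarith

lemma mem_pair (x : ℤ) (h : 2 * x ^ 2 + x ≤ 2) : x = -1 ∨ x = 0 := by
  by_contra hc
  push_neg at hc
  rcases le_or_gt 1 x with h1 | h1
  · nlinarith
  · have : x ≤ -2 := by omega
    nlinarith

lemma key (n : Fin 8 → ℤ) (hn : ∑ i, (2 * (n i) ^ 2 + n i) = 2) (i : Fin 8) :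
    n i = -1 ∨ n i = 0 := by
  apply mem_pair
  calc 2 * (n i) ^ 2 + n i ≤ ∑ j, (2 * (n j) ^ 2 + n j) := by
        apply Finset.single_le_sum (fun j _ => term_nonneg (n j)) (Finset.mem_univ i)
    _ = 2 := hn

lemma g_decide (n : Fin 8 → ℤ) (hn : ∑ i, (2 * (n i) ^ 2 + n i) = 2) (i : Fin 8) :
    gB (decide (n i = -1)) = n i := by
  rcases key n hn i with h | h <;> simp [gB, h]

theorem stmt14 :
    Nat.card {n : Fin 8 → ℤ // ∑ i, (2 * (n i)^2 + n i) = 2} = 28 := by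
  have e : {n : Fin 8 → ℤ // ∑ i, (2 * (n i)^2 + n i) = 2} ≃
      {f : Fin 8 → Bool // ∑ i, (2 * (gB (f i))^2 + gB (f i)) = 2} :=
    { toFun := fun x => ⟨fun i => decide (x.1 i = -1), by
        have := x.2
        calc ∑ i, (2 * (gB (decide (x.1 i = -1)))^2 + gB (decide (x.1 i = -1)))
            = ∑ i, (2 * (x.1 i)^2 + x.1 i) := by
              apply Finset.sum_congr rfl
              intro i _
              rw [g_decide x.1 x.2 i]
          _ = 2 := x.2⟩
      invFun := fun f => ⟨fun i => gB (f.1 i), f.2⟩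
      left_inv := fun x => by
        ext i
        exact g_decide x.1 x.2 i
      right_inv := fun f => by
        ext i
        cases h : f.1 i <;> simp [gB, h] }
  rw [Nat.card_congr e, Nat.card_eq_fintype_card]
  decide
end
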